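/- arXiv:1302.4239 — 6 statements merged into one kernel-verified Lean document; each statement's English description precedes it below -/
import Mathlib

section
/- For every integer n ≥ 1, (x+1)^n + ∑_{k=1}^{⌊n/2⌋} (-1)^k (n/(n-k)) C(n-k,k) (x+1)^{n-2k} x^k = 1 + x^n as polynomials in x. -/
/-! The left-hand side is the Dickson (Lucas) polynomial of the first kind `D_n(X, a)` evaluated at
`X = x + 1`, `a = x`. The recurrence `D_{n+2} = X D_{n+1} - a D_n` gives `D_n(u + v, u v) = u ^ n + v ^ n`,
and `u = 1`, `v = x` yields `1 + x ^ n`. The explicit coefficients `n / (n - k) * C(n - k, k)` come from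
`D_{n+2} = E_{n+2} - a E_n`, where the second-kind polynomials `E_m = ∑ (-a) ^ k C(m - k, k) X ^ (m - 2k)`
are identified through Pascal's rule. -/

open Finset Polynomial

theorem Nat.cast_div_sub_mul_choose {K : Type*} [Field K] [CharZero K] {n k : ℕ} (hk₀ : 0 < k)
    (hkn : k < n) :
    (n : K) / (n - k) * ((n - k).choose k : K) = (n - k).choose k + (n - 1 - k).choose (k - 1) := by
  obtain ⟨b, rfl⟩ := Nat.exists_eq_add_one_of_ne_zero hk₀.ne'
  obtain ⟨a, rfl⟩ : ∃ a, n = a + b + 2 := ⟨n - b - 2, by omega⟩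
  rw [show a + b + 2 - (b + 1) = a + 1 by omega, show a + b + 2 - 1 - (b + 1) = a by omega,
    Nat.add_sub_cancel]
  have habsorb : ((a + 1 : ℕ) : K) * a.choose b = (a + 1).choose (b + 1) * (b + 1 : ℕ) := by
    exact_mod_cast Nat.add_one_mul_choose_eq a b
  have hden : (↑(a + b + 2) : K) - ↑(b + 1) = a + 1 := by push_cast; ring
  rw [hden, div_mul_eq_mul_div, div_eq_iff (Nat.cast_add_one_ne_zero a)]
  push_cast at habsorb ⊢
  linear_combination -habsorb

theorem Nat.choose_sub_succ_succ (m k : ℕ) :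
    (m + 1 - k).choose (k + 1) = (m - k).choose k + (m - k).choose (k + 1) := by
  rcases le_or_gt k m with h | h
  · rw [Nat.sub_add_comm h, Nat.choose_succ_succ]
  · rw [Nat.sub_eq_zero_of_le (by omega : m + 1 ≤ k), Nat.sub_eq_zero_of_le h.le]
    simp [Nat.choose_eq_zero_of_lt (by omega : 0 < k)]

namespace Polynomial

variable {R : Type*} [CommRing R]

theorem dickson_one_eval_add (u v : R) (n : ℕ) :
    (dickson 1 (u * v) n).eval (u + v) = u ^ n + v ^ n := by
  induction n using Nat.twoStepInduction with
  | zero => norm_num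
  | one => simp
  | more n ih₀ ih₁ =>
    simp only [dickson_add_two, eval_sub, eval_mul, eval_X, eval_C, ih₀, ih₁]
    ring

theorem dickson_one_add_two (a : R) (n : ℕ) :
    dickson 1 a (n + 2) = dickson 2 a (n + 2) - C a * dickson 2 a n := by
  induction n using Nat.twoStepInduction with
  | zero => simp; ring
  | one => simp; ring
  | more n ih₀ ih₁ =>
    rw [dickson_add_two, ih₀, ih₁, dickson_add_two 2 a (n + 2)]
    linear_combination C a * dickson_add_two 2 a n

theorem dickson_two_term_add_two (s a : R) (m k : ℕ) :
    (-1) ^ (k + 1) * ((m + 2 - (k + 1)).choose (k + 1) : R) * s ^ (m + 2 - 2 * (k + 1)) *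
        a ^ (k + 1) =
      s * ((-1) ^ (k + 1) * ((m + 1 - (k + 1)).choose (k + 1) : R) *
          s ^ (m + 1 - 2 * (k + 1)) * a ^ (k + 1)) -
        a * ((-1) ^ k * ((m - k).choose k : R) * s ^ (m - 2 * k) * a ^ k) := by
  rw [show m + 2 - (k + 1) = m + 1 - k by omega, show m + 1 - (k + 1) = m - k by omega,
    show m + 2 - 2 * (k + 1) = m - 2 * k by omega, Nat.choose_sub_succ_succ]
  rcases le_or_gt (2 * k + 1) m with h | h
  · rw [show m - 2 * k = m + 1 - 2 * (k + 1) + 1 by omega]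
    push_cast
    ring
  · rw [Nat.choose_eq_zero_of_lt (by omega : m - k < k + 1)]
    push_cast
    ring

theorem dickson_two_eval_eq_sum (s a : R) (m N : ℕ) (hN : m / 2 < N) :
    (dickson 2 a m).eval s =
      ∑ k ∈ range N, (-1) ^ k * ((m - k).choose k : R) * s ^ (m - 2 * k) * a ^ k := by
  obtain ⟨N, rfl⟩ := Nat.exists_eq_add_one_of_ne_zero (by omega : N ≠ 0)
  induction m using Nat.twoStepInduction generalizing N with
  | zero => norm_num [sum_range_succ', Nat.choose_eq_zero_of_lt]
  | one => simp [sum_range_succ', Nat.choose_eq_zero_of_lt]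
  | more m ih₀ ih₁ =>
    obtain ⟨N, rfl⟩ := Nat.exists_eq_add_one_of_ne_zero (by omega : N ≠ 0)
    rw [dickson_add_two, eval_sub, eval_mul, eval_mul, eval_X, eval_C, ih₀ N (by omega),
      ih₁ (N + 1) (by omega), sum_range_succ', sum_range_succ' _ (N + 1)]
    simp only [dickson_two_term_add_two, sum_sub_distrib, ← mul_sum]
    simp only [Nat.reduceSubDiff, pow_zero, tsub_zero, Nat.choose_zero_right, Nat.cast_one,
      mul_one, mul_zero, one_mul]
    ring

theorem dickson_one_eval_eq_sum {K : Type*} [Field K] [CharZero K] (s a : K) {n : ℕ}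
    (hn : n ≠ 0) :
    (dickson 1 a n).eval s = ∑ k ∈ range (n / 2 + 1),
      (-1) ^ k * ((n : K) / ((n : K) - (k : K))) * ((n - k).choose k : K) * s ^ (n - 2 * k) *
        a ^ k := by
  match n, hn with
  | 1, _ => simp
  | m + 2, _ =>
    rw [dickson_one_add_two, eval_sub, eval_mul, eval_C,
      dickson_two_eval_eq_sum s a _ (m / 2 + 2) (by omega),
      dickson_two_eval_eq_sum s a m (m / 2 + 1) (by omega), show (m + 2) / 2 + 1 = m / 2 + 2 by omega,
      sum_range_succ', sum_range_succ' _ (m / 2 + 1), mul_sum, add_sub_right_comm,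
      ← sum_sub_distrib]
    congr 1
    · refine sum_congr rfl fun k hk => ?_
      have hkm : k ≤ m := by simp only [mem_range] at hk; omega
      have hcoeff := Nat.cast_div_sub_mul_choose (K := K) (n := m + 2) (k := k + 1) (by omega)
        (by omega)
      rw [show m + 2 - 1 - (k + 1) = m - k by omega, Nat.add_sub_cancel] at hcoeff
      rw [show m + 2 - 2 * (k + 1) = m - 2 * k by omega]
      linear_combination -(-1) ^ (k + 1) * s ^ (m - 2 * k) * a ^ (k + 1) * hcoeff
    · rw [Nat.cast_zero, sub_zero, div_self (by positivity)]
      simp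

end Polynomial

theorem stmt_1 (n : ℕ) (hn : 1 ≤ n) (x : ℚ) :
    (x + 1) ^ n + ∑ k ∈ Finset.Icc 1 (n / 2),
      (-1) ^ k * ((n : ℚ) / ((n : ℚ) - (k : ℚ))) * (Nat.choose (n - k) k : ℚ) *
        (x + 1) ^ (n - 2 * k) * x ^ k = 1 + x ^ n := by
  have hlucas := dickson_one_eval_add (1 : ℚ) x n
  rw [one_mul, one_pow, add_comm 1 x, dickson_one_eval_eq_sum _ _ (by omega), range_eq_Ico,
    sum_eq_sum_Ico_succ_bot (by omega), Ico_add_one_right_eq_Icc] at hlucas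
  rw [← hlucas, Nat.cast_zero, sub_zero, div_self (by positivity)]
  simp
end

section
/- Define p_1(n,3,x,s) by p_1(0) = 3, p_1(1) = x, p_1(2) = x^2, p_1(3) = x^3 - 3s, and p_1(n+3) = x·p_1(n+2) - s·p_1(n) for n ≥ 1. Then for n ≥ 1, p_1(n,3,x,s) = ∑_{j: 3j ≤ n} (-1)^j (n/(n-2j)) C(n-2j,j) x^{n-3j} s^j. -/
/-- The polynomials `p₁(n,3,x,s)`: `p₁(0)=3`, `p₁(1)=x`, `p₁(2)=x²`,
and `p₁(n+3) = x·p₁(n+2) - s·p₁(n)` (so in particular `p₁(3)=x³-3s`). -/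
def p1three (x s : ℚ) : ℕ → ℚ
  | 0 => 3
  | 1 => x
  | 2 => x ^ 2
  | (n + 3) => x * p1three x s (n + 2) - s * p1three x s n

/-!
With `c(n, j) = n / (n - 2j) · C(n - 2j, j)`, the identity `c(n+3, j+1) = c(n+2, j+1) + c(n, j)`
holds for `n ≥ 1` and every `j` (all three vanish once `3j > n`). Hence the sum satisfies the
recurrence of `p₁`, and since it may be taken over any range beyond `n / 3`, the recurrence can be
applied termwise; the initial values `x`, `x²`, `x³ - 3s` are checked directly.
-/

open Finset

def p1threeCoeff (n j : ℕ) : ℚ :=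
  (n : ℚ) / ((n : ℚ) - 2 * (j : ℚ)) * ((n - 2 * j).choose j : ℚ)

def p1threeTerm (x s : ℚ) (n j : ℕ) : ℚ :=
  (-1) ^ j * p1threeCoeff n j * x ^ (n - 3 * j) * s ^ j

lemma p1threeCoeff_eq_zero {n j : ℕ} (h : n < 3 * j) : p1threeCoeff n j = 0 := by
  simp [p1threeCoeff, Nat.choose_eq_zero_of_lt (show n - 2 * j < j by omega)]

lemma p1threeCoeff_zero {n : ℕ} (hn : n ≠ 0) : p1threeCoeff n 0 = 1 := by
  simp [p1threeCoeff, hn]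

lemma p1threeCoeff_add_two_mul (m j : ℕ) :
    p1threeCoeff (m + 2 * j) j = (m + 2 * j : ℚ) / m * (m.choose j : ℚ) := by
  simp [p1threeCoeff]

lemma p1threeCoeff_add_three_succ {n : ℕ} (hn : 1 ≤ n) (j : ℕ) :
    p1threeCoeff (n + 3) (j + 1) = p1threeCoeff (n + 2) (j + 1) + p1threeCoeff n j := by
  rcases lt_or_ge n (3 * j) with hlt | hle
  · rw [p1threeCoeff_eq_zero hlt, p1threeCoeff_eq_zero (by omega), p1threeCoeff_eq_zero (by omega),
      add_zero]
  obtain ⟨m, rfl⟩ : ∃ m, n = m + 2 * j := ⟨n - 2 * j, by omega⟩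
  have hm : (m : ℚ) ≠ 0 := by norm_cast; omega
  have hchoose : (m.choose (j + 1) : ℚ) * (j + 1) = m.choose j * (m - j) := by
    rw [← Nat.cast_succ, ← Nat.cast_sub (by omega : j ≤ m)]
    exact_mod_cast Nat.choose_succ_right_eq m j
  rw [show m + 2 * j + 3 = (m + 1) + 2 * (j + 1) by ring,
    show m + 2 * j + 2 = m + 2 * (j + 1) by ring,
    p1threeCoeff_add_two_mul, p1threeCoeff_add_two_mul, p1threeCoeff_add_two_mul,
    Nat.choose_succ_succ]
  push_cast
  field_simp
  linear_combination (-2 : ℚ) * hchoose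

lemma p1threeTerm_zero (x s : ℚ) {n : ℕ} (hn : n ≠ 0) : p1threeTerm x s n 0 = x ^ n := by
  simp [p1threeTerm, p1threeCoeff_zero hn]

lemma p1threeTerm_add_three_succ (x s : ℚ) {n : ℕ} (hn : 1 ≤ n) (j : ℕ) :
    p1threeTerm x s (n + 3) (j + 1) =
      x * p1threeTerm x s (n + 2) (j + 1) - s * p1threeTerm x s n j := by
  simp only [p1threeTerm, p1threeCoeff_add_three_succ hn]
  rw [show n + 3 - 3 * (j + 1) = n - 3 * j by omega]
  rcases lt_or_ge n (3 * j + 1) with hlt | hle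
  · rw [p1threeCoeff_eq_zero (show n + 2 < 3 * (j + 1) by omega)]
    ring
  · rw [show n - 3 * j = n + 2 - 3 * (j + 1) + 1 by omega]
    ring

lemma sum_range_p1threeTerm {x s : ℚ} {n N : ℕ} (hN : n < 3 * N) :
    ∑ j ∈ range N, p1threeTerm x s n j = ∑ j ∈ range (n / 3 + 1), p1threeTerm x s n j :=
  eventually_constant_sum
    (fun j hj ↦ by rw [p1threeTerm, p1threeCoeff_eq_zero (by omega)]; ring) (by omega)

lemma p1three_eq_sum_range_p1threeTerm (x s : ℚ) {n N : ℕ} (hn : 1 ≤ n) (hN : n < 3 * N) :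
    p1three x s n = ∑ j ∈ range N, p1threeTerm x s n j := by
  induction n using p1three.induct generalizing N with
  | case1 => omega
  | case2 => simp [sum_range_p1threeTerm hN, p1threeTerm_zero, p1three]
  | case3 => simp [sum_range_p1threeTerm hN, p1threeTerm_zero, p1three]
  | case4 n ih₂ ih₀ =>
    replace hN : n + 3 < 3 * N := hN
    show p1three x s (n + 3) = ∑ j ∈ range N, p1threeTerm x s (n + 3) j
    -- the sum at `n = 0` is not `p₁(0) = 3`, so `p₁(3)` is not reached by the recurrence
    rcases Nat.eq_zero_or_pos n with rfl | hn
    · rw [sum_range_p1threeTerm hN]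
      norm_num [sum_range_succ, p1threeTerm, p1threeCoeff, p1three]
      ring
    obtain ⟨M, rfl⟩ : ∃ M, N = M + 1 := ⟨N - 1, by omega⟩
    rw [p1three, ih₂ (by omega) (by omega : n + 2 < 3 * (M + 1)), ih₀ hn (by omega : n < 3 * M),
      mul_sum, mul_sum, sum_range_succ', sum_range_succ', p1threeTerm_zero _ _ (by omega),
      p1threeTerm_zero _ _ (by omega)]
    simp only [p1threeTerm_add_three_succ x s hn, sum_sub_distrib]
    ring

theorem stmt_6 (n : ℕ) (hn : 1 ≤ n) (x s : ℚ) :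
    p1three x s n = ∑ j ∈ Finset.range (n / 3 + 1),
      (-1) ^ j * ((n : ℚ) / ((n : ℚ) - 2 * (j : ℚ))) * (Nat.choose (n - 2 * j) j : ℚ) *
        x ^ (n - 3 * j) * s ^ j := by
  simpa only [p1threeTerm, p1threeCoeff, mul_assoc] using
    p1three_eq_sum_range_p1threeTerm x s hn (by omega : n < 3 * (n / 3 + 1))
end

section
/- For all n ≥ 1, ∑_{j: 3j ≤ n} (-1)^j (n/(n-2j)) C(n-2j,j) (x+1)^{n-3j} x^j − ∑_{j: 3j ≤ 2n} (n/(n-j)) C(n-j, 2n-3j) (x+1)^{2n-3j} x^j = 1 + (-1)^{n-1} x^n as polynomials in x. -/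
/-!
The first sum is the Girard–Waring expansion of the `n`-th power sum of the roots of
`t³ - (x + 1) t² + x = (t - 1)(t² - x t - x)`, the second that of the roots of
`t³ - x (x + 1) t - x² = (t + x)(t² - x t - x)`. Both cubics contain the factor `t² - x t - x`,
so with `Lₙ` the power sum of its two roots the sums are `1 + Lₙ` and `Lₙ + (-x)ⁿ`. This is
checked through Newton's identities: each sum satisfies the third-order recurrence of its cubic
(termwise, by a Pascal rule for the Waring coefficients), and so does its claimed value.
-/

open Finset

theorem cast_succ_mul_choose_succ {R : Type*} [CommRing R] (a k : ℕ) :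
    ((k : R) + 1) * a.choose (k + 1) = ((a : R) - k) * a.choose k := by
  rcases le_or_gt k a with h | h
  · have := congrArg (Nat.cast : ℕ → R) (Nat.choose_succ_right_eq a k)
    push_cast [Nat.cast_sub h] at this
    linear_combination this
  · simp [Nat.choose_eq_zero_of_lt h, Nat.choose_eq_zero_of_lt (Nat.lt_succ_of_lt h)]

theorem seq_eq_of_order_three_recurrence {R : Type*} [CommSemiring R] {u v : ℕ → R} {a b c : R}
    (hu : ∀ n, u (n + 3) = a * u (n + 2) + b * u (n + 1) + c * u n)
    (hv : ∀ n, v (n + 3) = a * v (n + 2) + b * v (n + 1) + c * v n)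
    (h0 : u 0 = v 0) (h1 : u 1 = v 1) (h2 : u 2 = v 2) : u = v := by
  let E : LinearRecurrence R := ⟨3, ![c, b, a]⟩
  have hsol (w : ℕ → R) (hw : ∀ n, w (n + 3) = a * w (n + 2) + b * w (n + 1) + c * w n) :
      E.IsSolution w := fun n => by
    simp [E, Fin.sum_univ_three, hw]
    ring
  refine (E.eq_iff_eqOn_range_order u v (hsol u hu) (hsol v hv)).mpr fun n hn => ?_
  simp only [E, coe_range, Set.mem_Iio] at hn
  interval_cases n <;> assumption

section

variable {K : Type*} [Field K]

/-- `waringTerm₁ x n j` has coefficient `waringCoeff 1 2 (n - 2j) j`, and `waringTerm₂ x n j`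
has coefficient `waringCoeff 3 (-1) (n - j) (2n - 3j)`. -/
def waringCoeff (α β : K) (a s : ℕ) : K := (α * a + β * s) / a * a.choose s

variable (x : K)

def waringTerm₁ (n j : ℕ) : K :=
  (-1) ^ j * ((n : K) / ((n : K) - 2 * (j : K))) * (Nat.choose (n - 2 * j) j : K) *
    (x + 1) ^ (n - 3 * j) * x ^ j

/-- The `if` encodes `2n - 3j ≥ 0`, which truncated subtraction would lose; the other condition
`n ≤ 2j` of the second sum is omitted, since the binomial coefficient vanishes outside it. -/
def waringTerm₂ (n j : ℕ) : K :=
  if 3 * j ≤ 2 * n then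
    ((n : K) / ((n : K) - (j : K))) * (Nat.choose (n - j) (2 * n - 3 * j) : K) *
      (x + 1) ^ (2 * n - 3 * j) * x ^ j
  else 0

def waringSum₁ (n : ℕ) : K := ∑ j ∈ range (n / 3 + 1), waringTerm₁ x n j

def waringSum₂ (n : ℕ) : K := ∑ j ∈ range (2 * n / 3 + 1), waringTerm₂ x n j

/-- `αⁿ + βⁿ` for the roots `α, β` of `t² - x t - x`. -/
def quadraticPowerSum : ℕ → K
  | 0 => 2
  | 1 => x
  | n + 2 => x * quadraticPowerSum (n + 1) + x * quadraticPowerSum n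

theorem waringTerm₁_eq_zero {n j : ℕ} (hn : 1 ≤ n) (h : n < 3 * j) :
    waringTerm₁ x n j = 0 := by
  rcases lt_trichotomy (2 * j) n with hlt | heq | hgt
  · simp [waringTerm₁, Nat.choose_eq_zero_of_lt (by omega : n - 2 * j < j)]
  · simp [waringTerm₁, ← heq]
  · simp [waringTerm₁, Nat.sub_eq_zero_of_le hgt.le,
      Nat.choose_eq_zero_of_lt (by omega : 0 < j)]

theorem waringTerm₂_eq_zero_of_lt {n j : ℕ} (h : 2 * j < n) : waringTerm₂ x n j = 0 := by
  simp [waringTerm₂, Nat.choose_eq_zero_of_lt (by omega : n - j < 2 * n - 3 * j)]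

theorem waringTerm₂_eq_zero_of_gt {n j : ℕ} (h : 2 * n < 3 * j) : waringTerm₂ x n j = 0 :=
  if_neg (by omega)

theorem waringSum₁_eq_sum_range {n N : ℕ} (hn : 1 ≤ n) (hN : n / 3 < N) :
    waringSum₁ x n = ∑ j ∈ range N, waringTerm₁ x n j :=
  (eventually_constant_sum (fun j hj => waringTerm₁_eq_zero x hn (by omega)) hN).symm

theorem waringSum₂_eq_sum_range {n N : ℕ} (hN : 2 * n / 3 < N) :
    waringSum₂ x n = ∑ j ∈ range N, waringTerm₂ x n j :=
  (eventually_constant_sum (fun j hj => waringTerm₂_eq_zero_of_gt x (by omega)) hN).symm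

theorem sum_filter_eq_waringSum₂ (n : ℕ) :
    ∑ j ∈ (range (2 * n / 3 + 1)).filter (fun j => n ≤ 2 * j),
        ((n : K) / ((n : K) - (j : K))) * (Nat.choose (n - j) (2 * n - 3 * j) : K) *
          (x + 1) ^ (2 * n - 3 * j) * x ^ j = waringSum₂ x n := by
  rw [sum_filter]
  refine sum_congr rfl fun j hj => ?_
  have hj : 3 * j ≤ 2 * n := by have := mem_range.mp hj; omega
  rcases le_or_gt n (2 * j) with h | h
  · rw [if_pos h, waringTerm₂, if_pos hj]
  · rw [if_neg h.not_ge, waringTerm₂_eq_zero_of_lt x h]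

variable [CharZero K]

theorem waringCoeff_succ_succ (α β : K) {a : ℕ} (ha : a ≠ 0) (s : ℕ) :
    waringCoeff α β (a + 1) (s + 1) = waringCoeff α β a (s + 1) + waringCoeff α β a s := by
  have hpascal : ((a + 1).choose (s + 1) : K) = a.choose s + a.choose (s + 1) := by
    exact_mod_cast Nat.choose_succ_succ a s
  have habsorb := cast_succ_mul_choose_succ (R := K) a s
  unfold waringCoeff
  field_simp
  push_cast
  linear_combination (a * (α * (a + 1) + β * (s + 1))) * hpascal - β * habsorb

theorem waringTerm₁_zero_right {n : ℕ} (hn : 1 ≤ n) : waringTerm₁ x n 0 = (x + 1) ^ n := by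
  simp [waringTerm₁, div_self (Nat.cast_ne_zero.mpr (by omega) : (n : K) ≠ 0)]

theorem waringTerm₁_add_three {m : ℕ} (hm : 1 ≤ m) (j : ℕ) :
    waringTerm₁ x (m + 3) (j + 1) =
      (x + 1) * waringTerm₁ x (m + 2) (j + 1) - x * waringTerm₁ x m j := by
  rcases lt_or_ge m (3 * j) with hlt | hle
  · rw [waringTerm₁_eq_zero x (by omega) (by omega : m + 3 < 3 * (j + 1)),
      waringTerm₁_eq_zero x (by omega) (by omega : m + 2 < 3 * (j + 1)),
      waringTerm₁_eq_zero x hm hlt]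
    ring
  obtain ⟨e, rfl⟩ := Nat.exists_eq_add_of_le hle
  -- at `e = 0` the exponent `e - 1` is truncated, but then `C(j, j + 1) = 0`
  have hpow : (x + 1) * (x + 1) ^ (e - 1) * ((j + e).choose (j + 1) : K) =
      (x + 1) ^ e * (j + e).choose (j + 1) := by
    rcases e with _ | e
    · simp
    · simp only [Nat.add_sub_cancel, pow_succ]; ring
  have hcoeff := waringCoeff_succ_succ (1 : K) 2 (a := j + e) (by omega) j
  simp only [waringCoeff] at hcoeff
  simp only [waringTerm₁]
  rw [show 3 * j + e + 3 - 2 * (j + 1) = j + e + 1 by omega,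
    show 3 * j + e + 3 - 3 * (j + 1) = e by omega,
    show 3 * j + e + 2 - 2 * (j + 1) = j + e by omega,
    show 3 * j + e + 2 - 3 * (j + 1) = e - 1 by omega,
    show 3 * j + e - 2 * j = j + e by omega,
    show 3 * j + e - 3 * j = e by omega]
  push_cast at hcoeff ⊢
  linear_combination (-1) ^ (j + 1) * x ^ (j + 1) * (x + 1) ^ e * hcoeff
    - (-1) ^ (j + 1) * x ^ (j + 1) * ((3 * j + e + 2) / (j + e)) * hpow

theorem waringTerm₂_add_three {n : ℕ} (hn : 1 ≤ n) (j : ℕ) :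
    waringTerm₂ x (n + 3) (j + 2) =
      x * (x + 1) * waringTerm₂ x (n + 1) (j + 1) + x ^ 2 * waringTerm₂ x n j := by
  rcases lt_trichotomy (2 * n) (3 * j) with hgt | heq | hlt
  · rw [waringTerm₂_eq_zero_of_gt x (by omega : 2 * (n + 3) < 3 * (j + 2)),
      waringTerm₂_eq_zero_of_gt x (by omega : 2 * (n + 1) < 3 * (j + 1)),
      waringTerm₂_eq_zero_of_gt x hgt]
    ring
  · -- the middle term is cut off, and both remaining coefficients equal `3`
    obtain ⟨d, rfl, rfl⟩ : ∃ d, n = 3 * d ∧ j = 2 * d := ⟨n / 3, by omega, by omega⟩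
    have hd : (d : K) ≠ 0 := Nat.cast_ne_zero.mpr (by omega)
    rw [waringTerm₂_eq_zero_of_gt x (by omega : 2 * (3 * d + 1) < 3 * (2 * d + 1))]
    simp only [waringTerm₂, if_pos (by omega : 3 * (2 * d + 2) ≤ 2 * (3 * d + 3)),
      if_pos heq.ge, show 2 * (3 * d + 3) - 3 * (2 * d + 2) = 0 by omega,
      show 2 * (3 * d) - 3 * (2 * d) = 0 by omega, Nat.choose_zero_right]
    push_cast
    field_simp
    ring
  · obtain ⟨p, t, hp, hnpt, hjpt⟩ :
        ∃ p t, 1 ≤ p ∧ n + t + 1 = 3 * p ∧ j + t + 1 = 2 * p :=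
      ⟨n - j, 2 * n - 3 * j - 1, by omega, by omega, by omega⟩
    have hn : (n : K) = 3 * p - t - 1 := by
      linear_combination (by exact_mod_cast hnpt : (n : K) + t + 1 = 3 * p)
    have hj : (j : K) = 2 * p - t - 1 := by
      linear_combination (by exact_mod_cast hjpt : (j : K) + t + 1 = 2 * p)
    have hcoeff := waringCoeff_succ_succ (3 : K) (-1) (a := p) (by omega) t
    simp only [waringCoeff] at hcoeff
    simp only [waringTerm₂, if_pos (by omega : 3 * (j + 2) ≤ 2 * (n + 3)),
      if_pos (by omega : 3 * (j + 1) ≤ 2 * (n + 1)), if_pos hlt.le]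
    rw [show n + 3 - (j + 2) = p + 1 by omega, show 2 * (n + 3) - 3 * (j + 2) = t + 1 by omega,
      show n + 1 - (j + 1) = p by omega, show 2 * (n + 1) - 3 * (j + 1) = t by omega,
      show n - j = p by omega, show 2 * n - 3 * j = t + 1 by omega]
    push_cast [hn, hj] at hcoeff ⊢
    linear_combination (x + 1) ^ (t + 1) * x ^ (j + 2) * hcoeff

theorem waringSum₁_add_three {m : ℕ} (hm : 1 ≤ m) :
    waringSum₁ x (m + 3) = (x + 1) * waringSum₁ x (m + 2) - x * waringSum₁ x m := by
  rw [waringSum₁_eq_sum_range x (by omega) (show (m + 3) / 3 < m + 2 by omega),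
    sum_range_succ' (waringTerm₁ x (m + 3)),
    waringSum₁_eq_sum_range x (by omega) (show (m + 2) / 3 < m + 2 by omega),
    sum_range_succ' (waringTerm₁ x (m + 2)),
    waringSum₁_eq_sum_range x hm (show m / 3 < m + 1 by omega)]
  simp only [waringTerm₁_add_three x hm, sum_sub_distrib, ← mul_sum,
    waringTerm₁_zero_right x (by omega : 1 ≤ m + 3),
    waringTerm₁_zero_right x (by omega : 1 ≤ m + 2)]
  ring

theorem waringSum₂_add_three {n : ℕ} (hn : 1 ≤ n) :
    waringSum₂ x (n + 3) = x * (x + 1) * waringSum₂ x (n + 1) + x ^ 2 * waringSum₂ x n := by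
  rw [waringSum₂_eq_sum_range x (show 2 * (n + 3) / 3 < n + 3 by omega),
    sum_range_succ' (waringTerm₂ x (n + 3)),
    sum_range_succ' (fun j => waringTerm₂ x (n + 3) (j + 1)),
    waringSum₂_eq_sum_range x (show 2 * (n + 1) / 3 < n + 2 by omega),
    sum_range_succ' (waringTerm₂ x (n + 1)),
    waringSum₂_eq_sum_range x (show 2 * n / 3 < n + 1 by omega)]
  simp only [waringTerm₂_add_three x hn, sum_add_distrib, ← mul_sum,
    waringTerm₂_eq_zero_of_lt x (by omega : 2 * 0 < n + 3),
    waringTerm₂_eq_zero_of_lt x (by omega : 2 * 1 < n + 3),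
    waringTerm₂_eq_zero_of_lt x (by omega : 2 * 0 < n + 1)]
  ring

theorem waringSum₁_eq {n : ℕ} (hn : 1 ≤ n) :
    waringSum₁ x n = 1 + quadraticPowerSum x n := by
  obtain ⟨k, rfl⟩ := Nat.exists_eq_add_of_le' hn
  refine congrFun (seq_eq_of_order_three_recurrence (u := fun k => waringSum₁ x (k + 1))
    (v := fun k => 1 + quadraticPowerSum x (k + 1)) (a := x + 1) (b := 0) (c := -x)
    (fun k => ?_) (fun k => ?_) ?_ ?_ ?_) k
  · simp only [waringSum₁_add_three x (by omega : 1 ≤ k + 1)]; ring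
  · simp only [quadraticPowerSum]; ring
  all_goals (simp [waringSum₁, waringTerm₁, quadraticPowerSum, sum_range_succ]; ring)

theorem waringSum₂_eq {n : ℕ} (hn : 1 ≤ n) :
    waringSum₂ x n = quadraticPowerSum x n + (-x) ^ n := by
  obtain ⟨k, rfl⟩ := Nat.exists_eq_add_of_le' hn
  refine congrFun (seq_eq_of_order_three_recurrence (u := fun k => waringSum₂ x (k + 1))
    (v := fun k => quadraticPowerSum x (k + 1) + (-x) ^ (k + 1)) (a := 0) (b := x * (x + 1))
    (c := x ^ 2) (fun k => ?_) (fun k => ?_) ?_ ?_ ?_) k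
  · simp only [waringSum₂_add_three x (by omega : 1 ≤ k + 1)]; ring
  · simp only [quadraticPowerSum]; ring
  all_goals
    norm_num [waringSum₂, waringTerm₂, quadraticPowerSum, sum_range_succ, Nat.choose] <;> ring

end

theorem stmt_11 (n : ℕ) (hn : 1 ≤ n) (x : ℚ) :
    (∑ j ∈ Finset.range (n / 3 + 1),
        (-1) ^ j * ((n : ℚ) / ((n : ℚ) - 2 * (j : ℚ))) * (Nat.choose (n - 2 * j) j : ℚ) *
          (x + 1) ^ (n - 3 * j) * x ^ j)
    - (∑ j ∈ (Finset.range (2 * n / 3 + 1)).filter (fun j => n ≤ 2 * j),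
        ((n : ℚ) / ((n : ℚ) - (j : ℚ))) * (Nat.choose (n - j) (2 * n - 3 * j) : ℚ) *
          (x + 1) ^ (2 * n - 3 * j) * x ^ j)
    = 1 + (-1) ^ (n - 1) * x ^ n := by
  rw [sum_filter_eq_waringSum₂]
  change waringSum₁ x n - _ = _
  rw [waringSum₁_eq x hn, waringSum₂_eq x hn]
  obtain ⟨k, rfl⟩ := Nat.exists_eq_add_of_le' hn
  rw [Nat.add_sub_cancel, neg_pow, pow_succ]
  ring
end

section
/- Let u(1),...,u(m) be the roots of z^m − x z^{m-1} + s (i.e., 1 − x z + s z^m = ∏_{j=1}^m (1 − u(j) z)), and let ω be a primitive n-th root of unity. Then 1 − ∏_{j=0}^{n-1}(1 − ω^j x + ω^{mj} s) = 1 − ∏_{k=1}^m (1 − u(k)^n). -/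
/-!
Substituting `z = ω ^ j` in `1 - x z + s z ^ m = ∏ₖ (1 - u k z)` turns each factor of the left
product into `∏ₖ (1 - u k ω ^ j)`. Exchanging the two products, it remains to see that
`∏ⱼ (1 - a ω ^ j) = 1 - a ^ n`, which is `X ^ n - a ^ n = ∏ⱼ (X - ω ^ j a)` evaluated at `X = 1`.
-/

open Finset Polynomial

theorem IsPrimitiveRoot.prod_range_one_sub_mul_pow {R : Type*} [CommRing R] [IsDomain R]
    {n : ℕ} {ω : R} (hω : IsPrimitiveRoot ω n) (hn : 0 < n) (a : R) :
    ∏ j ∈ range n, (1 - a * ω ^ j) = 1 - a ^ n := by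
  have h := congrArg (eval 1) (X_pow_sub_C_eq_prod hω hn (rfl : a ^ n = a ^ n))
  simpa [eval_prod, mul_comm] using h.symm

theorem stmt_16_general (n m : ℕ) (hn : 1 ≤ n) (x s : ℂ) (u : ℕ → ℂ)
    (hu : ∀ z : ℂ, 1 - x * z + s * z ^ m = ∏ j ∈ Finset.Icc 1 m, (1 - u j * z))
    (ω : ℂ) (hω : IsPrimitiveRoot ω n) :
    1 - ∏ j ∈ Finset.range n, (1 - ω ^ j * x + ω ^ (m * j) * s)
      = 1 - ∏ k ∈ Finset.Icc 1 m, (1 - (u k) ^ n) := by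
  congr 1
  calc ∏ j ∈ range n, (1 - ω ^ j * x + ω ^ (m * j) * s)
      = ∏ j ∈ range n, ∏ k ∈ Icc 1 m, (1 - u k * ω ^ j) :=
        prod_congr rfl fun j _ => by rw [← hu, pow_mul']; ring
    _ = ∏ k ∈ Icc 1 m, ∏ j ∈ range n, (1 - u k * ω ^ j) := prod_comm
    _ = ∏ k ∈ Icc 1 m, (1 - u k ^ n) :=
        prod_congr rfl fun k _ => hω.prod_range_one_sub_mul_pow hn (u k)

theorem stmt_16 (n m : ℕ) (hn : 1 ≤ n) (hm : 1 ≤ m) (x s : ℂ) (u : ℕ → ℂ)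
    (hu : ∀ z : ℂ, 1 - x * z + s * z ^ m = ∏ j ∈ Finset.Icc 1 m, (1 - u j * z))
    (ω : ℂ) (hω : IsPrimitiveRoot ω n) :
    1 - ∏ j ∈ Finset.range n, (1 - ω ^ j * x + ω ^ (m * j) * s)
      = 1 - ∏ k ∈ Finset.Icc 1 m, (1 - (u k) ^ n) :=
  stmt_16_general n m hn x s u hu ω hω
end

section
/- Define p_1(n,m,x,s) as the sequence satisfying p_1(n) = x^n for 1 ≤ n < m, p_1(m) = x^m − m s, and p_1(n) = x·p_1(n−1) − s·p_1(n−m) for n > m. Then p_1(n,m,x,s) = ∑_{j=0}^{⌊n/m⌋} (-1)^j (n/(n−(m−1)j)) C(n−(m−1)j, j) x^{n−mj} s^j for all n ≥ 1. -/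
/-!
The right-hand side `q n` satisfies the same initial values and the same recurrence as `p`.
Termwise, the recurrence `q n = x q (n-1) - s q (n-m)` reduces (with `k = n - (m-1) j`) to the
weighted Pascal rule
`(k + a j)/k · C(k,j) = (k + a j - 1)/(k-1) · C(k-1,j) + (k + a (j-1) - 1)/(k-1) · C(k-1,j-1)`,
and the terms with `m j > n` vanish because their binomial coefficient does, so all sums may be
taken over any range that is long enough. For `m = 2` the sum is the Dickson polynomial
`D_n(x, s)`.
-/

open Finset

theorem eq_of_linear_recurrence {R : Type*} [Ring R] {m : ℕ} (hm : 0 < m) {x s : R}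
    {p q : ℕ → R} (hinit : ∀ n, 1 ≤ n → n ≤ m → p n = q n)
    (hp : ∀ n, m < n → p n = x * p (n - 1) - s * p (n - m))
    (hq : ∀ n, m < n → q n = x * q (n - 1) - s * q (n - m)) :
    ∀ n, 1 ≤ n → p n = q n := by
  intro n
  induction n using Nat.strong_induction_on with
  | _ n ih =>
    intro hn
    rcases le_or_gt n m with hnm | hmn
    · exact hinit n hn hnm
    · rw [hp n hmn, hq n hmn, ih (n - 1) (by omega) (by omega), ih (n - m) (by omega) (by omega)]

section Dickson

variable {F : Type*} [Field F] (m : ℕ) (x s : F)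

def dicksonTerm (n j : ℕ) : F :=
  (-1) ^ j * ((n : F) / ((n : F) - (m - 1 : F) * (j : F))) *
    (Nat.choose (n - (m - 1) * j) j : F) * x ^ (n - m * j) * s ^ j

def dicksonSum (n : ℕ) : F :=
  ∑ j ∈ range (n / m + 1), dicksonTerm m x s n j

variable {m}

theorem dicksonTerm_eq_zero_of_lt {n j : ℕ} (h : n < m * j) : dicksonTerm m x s n j = 0 := by
  obtain ⟨a, rfl⟩ : ∃ a, m = a + 1 := Nat.exists_eq_succ_of_ne_zero (by rintro rfl; simp at h)
  have hj : j ≠ 0 := by rintro rfl; simp at h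
  rw [add_one_mul] at h
  simp [dicksonTerm, Nat.choose_eq_zero_of_lt (show n - a * j < j by omega)]

theorem sum_range_dicksonTerm_of_le (hm : 0 < m) {n N : ℕ} (hN : n / m + 1 ≤ N) :
    ∑ j ∈ range N, dicksonTerm m x s n j = dicksonSum m x s n := by
  refine (sum_subset (range_subset_range.mpr hN) fun j _ hj => ?_).symm
  refine dicksonTerm_eq_zero_of_lt x s ?_
  rw [mem_range, not_lt, Nat.succ_le_iff, Nat.div_lt_iff_lt_mul hm] at hj
  linarith

variable [CharZero F]

theorem weighted_choose_succ_succ (a : F) {K : ℕ} (hK : K ≠ 0) (i : ℕ) :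
    ((K + 1 : F) + a * (i + 1)) / (K + 1) * (K + 1).choose (i + 1) =
      ((K : F) + a * (i + 1)) / K * K.choose (i + 1) + ((K : F) + a * i) / K * K.choose i := by
  have pascal : ((K + 1).choose (i + 1) : F) = K.choose i + K.choose (i + 1) := by
    exact_mod_cast Nat.choose_succ_succ' K i
  have absorb : ((K : F) + 1) * K.choose i = (K + 1).choose (i + 1) * (i + 1) := by
    exact_mod_cast Nat.add_one_mul_choose_eq K i
  have hK' : (K : F) ≠ 0 := by exact_mod_cast hK
  have hK1 : (K : F) + 1 ≠ 0 := by exact_mod_cast K.succ_ne_zero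
  rw [div_mul_eq_mul_div, div_mul_eq_mul_div, div_mul_eq_mul_div, ← add_div,
    div_eq_div_iff hK1 hK']
  linear_combination (K * (K + 1) + a * (K + 1) * (i + 1)) * pascal + a * absorb

theorem dicksonTerm_zero {n : ℕ} (hn : n ≠ 0) : dicksonTerm m x s n 0 = x ^ n := by
  have : (n : F) ≠ 0 := by exact_mod_cast hn
  simp [dicksonTerm, this]

theorem dicksonTerm_succ (hm : 0 < m) {n : ℕ} (hmn : m < n) (j : ℕ) :
    dicksonTerm m x s n (j + 1) =
      x * dicksonTerm m x s (n - 1) (j + 1) - s * dicksonTerm m x s (n - m) j := by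
  rcases lt_or_ge n (m * (j + 1)) with hlt | hle
  · rw [dicksonTerm_eq_zero_of_lt x s hlt, dicksonTerm_eq_zero_of_lt x s (by omega),
      dicksonTerm_eq_zero_of_lt x s (by rw [mul_add_one] at hlt; omega)]
    ring
  obtain ⟨a, rfl⟩ : ∃ a, m = a + 1 := Nat.exists_eq_succ_of_ne_zero hm.ne'
  obtain ⟨K, rfl⟩ : ∃ K, n = K + 1 + a * (j + 1) := ⟨n - 1 - a * (j + 1), by
    rw [add_one_mul] at hle; omega⟩
  have hK0 : K ≠ 0 := by
    rintro rfl
    rw [add_one_mul] at hle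
    rcases j with _ | j <;> simp at hmn hle <;> omega
  simp only [dicksonTerm, Nat.add_sub_cancel]
  rw [show K + 1 + a * (j + 1) - 1 - a * (j + 1) = K by omega,
    show K + 1 + a * (j + 1) - (a + 1) - a * j = K by rw [mul_add_one]; omega,
    show K + 1 + a * (j + 1) - (a + 1) * (j + 1) = K - j by rw [add_one_mul]; omega,
    show K + 1 + a * (j + 1) - 1 - (a + 1) * (j + 1) = K - (j + 1) by rw [add_one_mul]; omega,
    show K + 1 + a * (j + 1) - (a + 1) - (a + 1) * j = K - j by
      rw [add_one_mul, mul_add_one]; omega,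
    Nat.cast_sub (show 1 ≤ K + 1 + a * (j + 1) by omega),
    Nat.cast_sub (show a + 1 ≤ K + 1 + a * (j + 1) by rw [mul_add_one] at hmn ⊢; omega)]
  push_cast
  -- when `j = K` both sides of `hx` vanish although the powers of `x` differ
  have hx : x * ((K.choose (j + 1) : F) * x ^ (K - (j + 1))) = K.choose (j + 1) * x ^ (K - j) := by
    rcases lt_or_ge j K with hjK | hKj
    · rw [show K - j = K - (j + 1) + 1 by omega, pow_succ]
      ring
    · simp [Nat.choose_eq_zero_of_lt (show K < j + 1 by omega)]
  linear_combination
    (-1) ^ (j + 1) * x ^ (K - j) * s ^ (j + 1) * weighted_choose_succ_succ (a : F) hK0 j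
    - (-1) ^ (j + 1) * ((K + a * (j + 1)) / K) * s ^ (j + 1) * hx

theorem dicksonSum_of_lt {n : ℕ} (hn : 1 ≤ n) (hnm : n < m) : dicksonSum m x s n = x ^ n := by
  rw [dicksonSum, Nat.div_eq_of_lt hnm, zero_add, sum_range_one, dicksonTerm_zero x s (by omega)]

theorem dicksonSum_self (hm : 0 < m) : dicksonSum m x s m = x ^ m - m * s := by
  rw [dicksonSum, Nat.div_self hm, sum_range_succ, sum_range_one, dicksonTerm_zero x s hm.ne']
  simp only [dicksonTerm, pow_one, Nat.cast_one, mul_one, sub_sub_cancel, div_one, neg_mul, one_mul,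
    show m - (m - 1) = 1 by omega, Nat.choose_self, tsub_self, pow_zero]
  ring

theorem dicksonSum_of_gt (hm : 0 < m) {n : ℕ} (hmn : m < n) :
    dicksonSum m x s n = x * dicksonSum m x s (n - 1) - s * dicksonSum m x s (n - m) := by
  have le_succ : ∀ k, k / m + 1 ≤ k + 1 := fun k => by gcongr; exact Nat.div_le_self k m
  rw [← sum_range_dicksonTerm_of_le x s hm (le_succ n),
    ← sum_range_dicksonTerm_of_le x s hm (N := n + 1) ((le_succ _).trans (by omega)),
    ← sum_range_dicksonTerm_of_le x s hm (N := n) ((le_succ _).trans (by omega)),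
    sum_range_succ', sum_range_succ' _ n]
  simp only [dicksonTerm_succ x s hm hmn, sum_sub_distrib, mul_add, mul_sum,
    dicksonTerm_zero x s (show n ≠ 0 by omega), dicksonTerm_zero x s (show n - 1 ≠ 0 by omega)]
  rw [← pow_succ', Nat.sub_add_cancel (by omega)]
  ring

end Dickson

theorem stmt_18 (m : ℕ) (hm : 2 ≤ m) (x s : ℚ) (p : ℕ → ℚ)
    (hinit : ∀ n : ℕ, 1 ≤ n → n < m → p n = x ^ n)
    (hm' : p m = x ^ m - m * s)
    (hrec : ∀ n : ℕ, m < n → p n = x * p (n - 1) - s * p (n - m)) :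
    ∀ n : ℕ, 1 ≤ n →
      p n = ∑ j ∈ Finset.range (n / m + 1),
        (-1) ^ j * ((n : ℚ) / ((n : ℚ) - (m - 1 : ℚ) * (j : ℚ))) *
          (Nat.choose (n - (m - 1) * j) j : ℚ) * x ^ (n - m * j) * s ^ j := by
  have hm0 : 0 < m := by omega
  refine eq_of_linear_recurrence (q := dicksonSum m x s) hm0 (fun n hn hnm => ?_) hrec
    (fun n hmn => dicksonSum_of_gt x s hm0 hmn)
  rcases hnm.lt_or_eq with hlt | rfl
  · rw [hinit n hn hlt, dicksonSum_of_lt x s hn hlt]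
  · rw [hm', dicksonSum_self x s hm0]
end

section
/- For all n ≥ 0, the Fibonacci number F_{n+1} equals ∑_{h ∈ ℤ} (-1)^h C(n, ⌊(n+5h)/2⌋), where C(n,k) = 0 for k < 0 or k > n (so the sum is finite). Similarly F_n = ∑_{h ∈ ℤ} (-1)^h C(n, ⌊(n+5h+2)/2⌋). -/
/-!
Both sums have the form `∑_k C(n,k) v(2k - n)` for a `10`-periodic weight `v`: the sum of `v`
over the endpoints of the `2^n` walks of `n` steps `±1` starting at `0`. One more step replaces
`v` by its neighbour sum `N v (m) = v (m - 1) + v (m + 1)`, and reflecting the walks replaces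
`v (m)` by `v (-m)`. For the two weights of the theorem, `v (m) + v (-m)` equals `N w` and `w`
respectively, where `w` is a combination of eigenfunctions of `N` with eigenvalues `φ` and
`1 - φ`; hence `N (N w) = N w + w`, and the walk sums of `w` obey the Fibonacci recurrence.
-/

open Finset Function

section WalkSum

variable {M : Type*} [AddCommMonoid M]

def neighborSum (f : ℤ → M) (m : ℤ) : M := f (m - 1) + f (m + 1)

def walkSum (n : ℕ) (f : ℤ → M) : M :=
  ∑ p ∈ antidiagonal n, n.choose p.1 • f (p.1 - p.2)

theorem walkSum_zero (f : ℤ → M) : walkSum 0 f = f 0 := by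
  simp [walkSum]

theorem walkSum_succ (n : ℕ) (f : ℤ → M) : walkSum (n + 1) f = walkSum n (neighborSum f) := by
  unfold walkSum neighborSum
  rw [Finset.sum_antidiagonal_choose_succ_nsmul (fun i j => f ((i : ℤ) - j)), ← sum_add_distrib]
  refine sum_congr rfl fun p hp => ?_
  rw [← Nat.choose_symm_of_eq_add (mem_antidiagonal.1 hp).symm, smul_add]
  push_cast
  ring_nf

theorem walkSum_add (n : ℕ) (f g : ℤ → M) : walkSum n (f + g) = walkSum n f + walkSum n g := by
  simp [walkSum, smul_add, sum_add_distrib]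

theorem walkSum_comp_neg (n : ℕ) (f : ℤ → M) : walkSum n (fun m => f (-m)) = walkSum n f := by
  unfold walkSum
  rw [← Nat.sum_antidiagonal_swap]
  refine sum_congr rfl fun p hp => ?_
  dsimp only
  rw [Prod.fst_swap, Prod.snd_swap, neg_sub,
    Nat.choose_symm_of_eq_add (mem_antidiagonal.1 hp).symm]

theorem map_walkSum {N : Type*} [AddCommMonoid N] (φ : M →+ N) (n : ℕ) (f : ℤ → M) :
    φ (walkSum n f) = walkSum n (φ ∘ f) := by
  simp [walkSum, map_sum, map_nsmul]

theorem walkSum_eq_fib_nsmul {w : ℤ → M} (hw : neighborSum (neighborSum w) = neighborSum w + w)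
    (hw0 : w 0 = 0) (n : ℕ) : walkSum n w = Nat.fib n • neighborSum w 0 := by
  induction n using Nat.twoStepInduction with
  | zero => simp [walkSum_zero, hw0]
  | one => simp [walkSum_succ, walkSum_zero]
  | more n ih₀ ih₁ =>
    rw [walkSum_succ, walkSum_succ, hw, walkSum_add, ← walkSum_succ, ih₀, ih₁, Nat.fib_add_two,
      add_smul, add_comm]

theorem two_nsmul_walkSum (n : ℕ) (f : ℤ → M) :
    2 • walkSum n f = walkSum n (fun m => f m + f (-m)) := by
  rw [two_nsmul]
  nth_rw 2 [← walkSum_comp_neg]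
  exact (walkSum_add n f fun m => f (-m)).symm

end WalkSum

theorem finsum_comp_of_support_subset_range {α β M : Type*} [AddCommMonoid M] {e : β → α}
    (he : Injective e) {f : α → M} (hf : support f ⊆ Set.range e) :
    ∑ᶠ b, f (e b) = ∑ᶠ a, f a := by
  calc ∑ᶠ b, f (e b) = ∑ᶠ a ∈ Set.range e, f a := (finsum_mem_range he).symm
    _ = ∑ᶠ a ∈ Set.univ, f a := finsum_mem_inter_support_eq' f _ _ fun a ha => by simp [hf ha]
    _ = ∑ᶠ a, f a := finsum_mem_univ f

theorem finsum_mul_choose_eq_walkSum {R : Type*} [CommSemiring R] (n : ℕ) {e : ℤ → ℤ}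
    {c v : ℤ → R} (he : Injective e) (hc : ∀ h, v (2 * e h - n) = c h)
    (hv : ∀ k, v (2 * k - n) ≠ 0 → k ∈ Set.range e) :
    ∑ᶠ h, c h * (if 0 ≤ e h then (n.choose (e h).toNat : R) else 0) = walkSum n v := by
  set g : ℤ → R := fun k => v (2 * k - n) * if 0 ≤ k then (n.choose k.toNat : R) else 0
  calc ∑ᶠ h, c h * (if 0 ≤ e h then (n.choose (e h).toNat : R) else 0)
      = ∑ᶠ h, g (e h) := by simp only [g, hc]
    _ = ∑ᶠ k, g k :=
      finsum_comp_of_support_subset_range he fun k hk => hv k (left_ne_zero_of_mul hk)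
    _ = ∑ᶠ k : ℕ, g k := by
      refine (finsum_comp_of_support_subset_range Nat.cast_injective fun k hk => ?_).symm
      by_cases hk0 : 0 ≤ k
      · exact ⟨k.toNat, Int.toNat_of_nonneg hk0⟩
      · simp [g, hk0] at hk
    _ = ∑ k ∈ range (n + 1), g k := by
      refine finsum_eq_sum_of_support_subset _ fun k hk => ?_
      by_contra hkn
      simp_all [g, Nat.choose_eq_zero_of_lt]
    _ = walkSum n v := by
      rw [walkSum, Nat.sum_antidiagonal_eq_sum_range_succ_mk]
      refine sum_congr rfl fun k hk => ?_
      have hkn : k ≤ n := Nat.lt_succ_iff.1 (mem_range.1 hk)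
      simp only [g, Nat.cast_nonneg, if_true, Int.toNat_natCast, nsmul_eq_mul, Nat.cast_sub hkn]
      rw [mul_comm]
      ring_nf

/-- Equals `(2/√5)(cos(πm/5) - cos(3πm/5))`. -/
def fibWeight (m : ℤ) : ℤ :=
  if (m : ZMod 10) ∈ ({1, 2, 8, 9} : Finset (ZMod 10)) then 1
  else if (m : ZMod 10) ∈ ({3, 4, 6, 7} : Finset (ZMod 10)) then -1 else 0

def schurWeight (m : ℤ) : ℤ :=
  if (m : ZMod 10) = 0 ∨ (m : ZMod 10) = 9 then 1
  else if (m : ZMod 10) = 4 ∨ (m : ZMod 10) = 5 then -1 else 0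

theorem neighborSum_neighborSum_fibWeight :
    neighborSum (neighborSum fibWeight) = neighborSum fibWeight + fibWeight := by
  funext m
  simp only [neighborSum, fibWeight, Pi.add_apply, Int.cast_sub, Int.cast_add, Int.cast_one]
  generalize (m : ZMod 10) = x
  revert x
  decide

theorem schurWeight_add_schurWeight_neg (m : ℤ) :
    schurWeight m + schurWeight (-m) = neighborSum fibWeight m := by
  simp only [neighborSum, fibWeight, schurWeight, Int.cast_sub, Int.cast_add, Int.cast_one,
    Int.cast_neg]
  generalize (m : ZMod 10) = x
  revert x
  decide

theorem schurWeight_sub_two_add_schurWeight_neg_sub_two (m : ℤ) :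
    schurWeight (m - 2) + schurWeight (-m - 2) = fibWeight m := by
  simp only [fibWeight, schurWeight, Int.cast_sub, Int.cast_neg, Int.cast_ofNat]
  generalize (m : ZMod 10) = x
  revert x
  decide

theorem intCast_schurWeight_eq_neg_one_zpow {m h : ℤ} (hm : m = 5 * h ∨ m = 5 * h - 1) :
    (schurWeight m : ℚ) = (-1) ^ h := by
  unfold schurWeight
  rw [← ZMod.intCast_mod, Nat.cast_ofNat]
  obtain ⟨q, rfl | rfl⟩ := Int.even_or_odd' h
  · rw [Even.neg_one_zpow ⟨q, two_mul q⟩]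
    obtain h | h : m % 10 = 0 ∨ m % 10 = 9 := by omega
    all_goals rw [h]; rfl
  · rw [Odd.neg_one_zpow ⟨q, rfl⟩]
    obtain h | h : m % 10 = 5 ∨ m % 10 = 4 := by omega
    all_goals rw [h]; rfl

theorem exists_of_schurWeight_ne_zero {m : ℤ} (hm : schurWeight m ≠ 0) :
    ∃ h, m = 5 * h ∨ m = 5 * h - 1 := by
  unfold schurWeight at hm
  suffices m % 5 = 0 ∨ m % 5 = 4 by
    rcases this with h | h
    exacts [⟨m / 5, Or.inl (by omega)⟩, ⟨(m + 1) / 5, Or.inr (by omega)⟩]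
  rw [← ZMod.intCast_mod, Nat.cast_ofNat] at hm
  have h0 : 0 ≤ m % 10 := Int.emod_nonneg m (by norm_num)
  have h1 : m % 10 < 10 := Int.emod_lt_of_pos m (by norm_num)
  generalize hr : m % 10 = r at hm h0 h1
  interval_cases r <;> first | omega | exact absurd rfl hm

theorem walkSum_schurWeight (n : ℕ) : walkSum n schurWeight = Nat.fib (n + 1) := by
  have h : 2 • walkSum n schurWeight = Nat.fib (n + 1) • 2 := by
    rw [two_nsmul_walkSum, funext schurWeight_add_schurWeight_neg, ← walkSum_succ,
      walkSum_eq_fib_nsmul neighborSum_neighborSum_fibWeight rfl]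
    rfl
  rw [nsmul_eq_mul, nsmul_eq_mul, Nat.cast_ofNat] at h
  omega

theorem walkSum_schurWeight_sub_two (n : ℕ) :
    walkSum n (fun m => schurWeight (m - 2)) = Nat.fib n := by
  have h : 2 • walkSum n (fun m => schurWeight (m - 2)) = Nat.fib n • 2 := by
    rw [two_nsmul_walkSum, funext schurWeight_sub_two_add_schurWeight_neg_sub_two,
      walkSum_eq_fib_nsmul neighborSum_neighborSum_fibWeight rfl]
    rfl
  rw [nsmul_eq_mul, nsmul_eq_mul, Nat.cast_ofNat] at h
  omega

theorem finsum_neg_one_zpow_mul_choose_eq_walkSum (n : ℕ) (j : ℤ) :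
    ∑ᶠ h : ℤ, (-1 : ℚ) ^ h *
      (if 0 ≤ Int.fdiv ((n : ℤ) + 5 * h + 2 * j) 2 then
        (n.choose (Int.fdiv ((n : ℤ) + 5 * h + 2 * j) 2).toNat : ℚ) else 0) =
      walkSum n (fun m => schurWeight (m - 2 * j)) := by
  have hfdiv (h : ℤ) : Int.fdiv ((n : ℤ) + 5 * h + 2 * j) 2 = ((n : ℤ) + 5 * h + 2 * j) / 2 :=
    Int.fdiv_eq_ediv_of_nonneg _ zero_le_two
  show _ = Int.castAddHom ℚ (walkSum n _)
  rw [map_walkSum]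
  refine finsum_mul_choose_eq_walkSum n (fun a b hab => ?_) (fun h => ?_) (fun k hk => ?_)
  · simp only [hfdiv] at hab
    omega
  · -- `2 e(h) - n - 2j` is `5h` or `5h - 1` according to the parity of `n + h`
    refine intCast_schurWeight_eq_neg_one_zpow ?_
    simp only [hfdiv]
    omega
  · obtain ⟨h, hm⟩ := exists_of_schurWeight_ne_zero (m := 2 * k - n - 2 * j) (by simpa using hk)
    exact ⟨h, by simp only [hfdiv]; omega⟩

/-- Schur's identities: `F_{n+1} = ∑_{h ∈ ℤ} (-1)^h C(n, ⌊(n+5h)/2⌋)` and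
`F_n = ∑_{h ∈ ℤ} (-1)^h C(n, ⌊(n+5h+2)/2⌋)`, where the binomial coefficient
is taken to vanish outside `0 ≤ k ≤ n` (so the sums are finite). -/
theorem stmt_19 (n : ℕ) :
    ((Nat.fib (n + 1) : ℚ) = ∑ᶠ h : ℤ, (-1 : ℚ) ^ h *
      (if 0 ≤ Int.fdiv ((n : ℤ) + 5 * h) 2 then
        (Nat.choose n (Int.toNat (Int.fdiv ((n : ℤ) + 5 * h) 2)) : ℚ) else 0)) ∧
    ((Nat.fib n : ℚ) = ∑ᶠ h : ℤ, (-1 : ℚ) ^ h *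
      (if 0 ≤ Int.fdiv ((n : ℤ) + 5 * h + 2) 2 then
        (Nat.choose n (Int.toNat (Int.fdiv ((n : ℤ) + 5 * h + 2) 2)) : ℚ) else 0)) := by
  have hfib_succ := finsum_neg_one_zpow_mul_choose_eq_walkSum n 0
  have hfib := finsum_neg_one_zpow_mul_choose_eq_walkSum n 1
  simp only [mul_zero, add_zero, sub_zero] at hfib_succ
  simp only [mul_one] at hfib
  rw [hfib_succ, hfib, walkSum_schurWeight, walkSum_schurWeight_sub_two]
  simp only [Int.cast_natCast, and_self]
end
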